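/- arXiv:2402.09500 — 2 statements merged into one kernel-verified Lean document; each statement's English description precedes it below -/
import Mathlib

section
/- Let T be a trait of programs, let sem(T) = {c | every code d with eval d = eval c belongs to T} be its semantic part, and let syn(T) = T \ sem(T) be its syntactic part. If sem(T) is nonempty and syn(T) is nonempty and finite, then membership in T is not a computable predicate. -/
/-!
The semantic part `sem T` of a trait is closed under equality of the computed functions, so by
Rice's theorem it is decidable only if it is empty or everything. Since `sem T = T \ syn T` and a
finite set is decidable, a decidable `T` would make `sem T` decidable; being nonempty, it would be
all codes, leaving no room for a nonempty syntactic part.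
-/

namespace ComputablePred

variable {α : Type*} [Primcodable α]

protected theorem and {p q : α → Prop} :
    ComputablePred p → ComputablePred q → ComputablePred fun a => p a ∧ q a
  | ⟨_, hp⟩, ⟨_, hq⟩ =>
    Computable.computablePred <| (Primrec.and.to_comp.comp hp hq).of_eq fun _ => by simp

theorem mem_of_finite {s : Set α} (hs : s.Finite) : ComputablePred (· ∈ s) :=
  ((PrimrecRel.exists_mem_list Primrec.eq).comp (Primrec.const hs.toFinset.toList)
    Primrec.id).computablePred.of_eq fun a => by simp

theorem mem_diff_of_finite {s t : Set α} (hs : ComputablePred (· ∈ s)) (ht : t.Finite) :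
    ComputablePred (· ∈ s \ t) :=
  hs.and (mem_of_finite ht).not

end ComputablePred

namespace Nat.Partrec.Code

def semPart (T : Set Code) : Set Code :=
  {c | ∀ d, eval d = eval c → d ∈ T}

variable {T : Set Code}

theorem semPart_subset : semPart T ⊆ T :=
  fun c hc => hc c rfl

theorem mem_semPart_congr {c c' : Code} (h : eval c = eval c') :
    c ∈ semPart T ↔ c' ∈ semPart T :=
  ⟨fun hc d hd => hc d (hd.trans h.symm), fun hc d hd => hc d (hd.trans h)⟩

theorem semPart_eq_empty_or_univ (hT : ComputablePred (· ∈ T)) (hsyn : (T \ semPart T).Finite) :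
    semPart T = ∅ ∨ semPart T = Set.univ := by
  have hsem : ComputablePred (· ∈ semPart T) :=
    (ComputablePred.mem_diff_of_finite hT hsyn).of_eq fun _ => by
      rw [Set.sdiff_sdiff_cancel_left semPart_subset]
  exact (ComputablePred.rice₂ _ fun _ _ => mem_semPart_congr).1 hsem

end Nat.Partrec.Code

open Nat.Partrec.Code

/-- If the semantic part of a trait `T` is nonempty and its syntactic part is
nonempty and finite, then `T` is undecidable. -/
theorem undecidable_of_sem_nonempty_syn_finite (T : Set Nat.Partrec.Code)
    (hsem_ne : ({c : Nat.Partrec.Code | ∀ d : Nat.Partrec.Code,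
        Nat.Partrec.Code.eval d = Nat.Partrec.Code.eval c → d ∈ T}).Nonempty)
    (hsyn_ne : (T \ {c : Nat.Partrec.Code | ∀ d : Nat.Partrec.Code,
        Nat.Partrec.Code.eval d = Nat.Partrec.Code.eval c → d ∈ T}).Nonempty)
    (hsyn_fin : (T \ {c : Nat.Partrec.Code | ∀ d : Nat.Partrec.Code,
        Nat.Partrec.Code.eval d = Nat.Partrec.Code.eval c → d ∈ T}).Finite) :
    ¬ ComputablePred (fun c : Nat.Partrec.Code => c ∈ T) := by
  intro hT
  change (semPart T).Nonempty at hsem_ne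
  change (T \ semPart T).Nonempty at hsyn_ne
  rcases semPart_eq_empty_or_univ hT hsyn_fin with hempty | huniv
  · exact hsem_ne.ne_empty hempty
  · exact hsyn_ne.ne_empty (by rw [huniv, Set.sdiff_univ])
end

section
/- Any nontrivial trait that is resource-bounded by a discriminating resource measure is syntactic. Precisely: let Φ : Code → ℕ → Part ℕ be a resource measure, meaning (i) for every code c and input n, Φ c n is defined iff eval c n is defined, and (ii) the predicate {(c, n, m) : Code × ℕ × ℕ | Φ c n = Part.some m} is a computable predicate. Suppose Φ is discriminating: for every code c there exists a code d with eval d = eval c such that for every input n and all values a ∈ Φ c n and b ∈ Φ d n, a < b. Let T be a trait of programs that is nontrivial (neither empty nor all codes) and Φ-bounded: there exists a total computable function ξ : ℕ → ℕ such that for every c ∈ T and every input n, there exists m ∈ Φ c n with m ≤ ξ n. Then T is syntactic: there exist a code c ∈ T and a code d with eval d = eval c and d ∉ T. -/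
/-!
If a trait `T` containing `c₀` were semantic, it would contain every program obtained from `c₀`
by iterating the discriminating transformation `c ↦ d`. These all compute `eval c₀`, and their
resource values at a fixed input strictly increase along the iteration, so they exceed any
bound `ξ n`, contradicting `Φ`-boundedness.
-/

section

variable {α β : Type*}

def Discriminating (ev : α → β) (Φ : α → ℕ → Part ℕ) : Prop :=
  ∀ c, ∃ d, ev d = ev c ∧ ∀ n, ∀ a ∈ Φ c n, ∀ b ∈ Φ d n, a < b

theorem Discriminating.not_bounded_of_semantic {ev : α → β} {Φ : α → ℕ → Part ℕ}
    (hΦ : Discriminating ev Φ) {S : Set α} (hS : ∀ c ∈ S, ∀ d, ev d = ev c → d ∈ S)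
    {c₀ : α} (hc₀ : c₀ ∈ S) (n B : ℕ) : ¬ ∀ c ∈ S, ∃ m ∈ Φ c n, m ≤ B := by
  intro hbdd
  choose g hg_eval hg_lt using hΦ
  have hmem : ∀ k, g^[k] c₀ ∈ S := by
    intro k
    induction k with
    | zero => exact hc₀
    | succ k ih =>
      rw [Function.iterate_succ_apply']
      exact hS _ ih _ (hg_eval _)
  choose m hm hm_le using fun k => hbdd _ (hmem k)
  have hm_mono : StrictMono m := strictMono_nat_of_lt_succ fun k =>
    hg_lt _ n _ (hm k) _ (Function.iterate_succ_apply' g k c₀ ▸ hm (k + 1))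
  exact (hm_mono.id_le (B + 1)).not_gt (Nat.lt_succ_of_le (hm_le (B + 1)))

end

theorem nontrivial_resource_bounded_is_syntactic_general
    (Φ : Nat.Partrec.Code → ℕ → Part ℕ)
    (hdisc : ∀ c : Nat.Partrec.Code, ∃ d : Nat.Partrec.Code,
      Nat.Partrec.Code.eval d = Nat.Partrec.Code.eval c ∧
      ∀ n : ℕ, ∀ a ∈ Φ c n, ∀ b ∈ Φ d n, a < b)
    (T : Set Nat.Partrec.Code) (hne : T ≠ ∅)
    (hbdd : ∃ ξ : ℕ → ℕ, Computable ξ ∧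
      ∀ c ∈ T, ∀ n : ℕ, ∃ m ∈ Φ c n, m ≤ ξ n) :
    ∃ c ∈ T, ∃ d : Nat.Partrec.Code,
      Nat.Partrec.Code.eval d = Nat.Partrec.Code.eval c ∧ d ∉ T := by
  by_contra hsyn
  push Not at hsyn
  obtain ⟨ξ, -, hξ⟩ := hbdd
  obtain ⟨c₀, hc₀⟩ := Set.nonempty_iff_ne_empty.mpr hne
  exact Discriminating.not_bounded_of_semantic hdisc hsyn hc₀ 0 (ξ 0) fun c hc => hξ c hc 0

/-- Any nontrivial trait that is bounded by a discriminating resource measure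
(Blum complexity measure) is syntactic. -/
theorem nontrivial_resource_bounded_is_syntactic
    (Φ : Nat.Partrec.Code → ℕ → Part ℕ)
    (hdom : ∀ (c : Nat.Partrec.Code) (n : ℕ),
      (Φ c n).Dom ↔ (Nat.Partrec.Code.eval c n).Dom)
    (hgraph : ComputablePred (fun p : Nat.Partrec.Code × ℕ × ℕ =>
      Φ p.1 p.2.1 = Part.some p.2.2))
    (hdisc : ∀ c : Nat.Partrec.Code, ∃ d : Nat.Partrec.Code,
      Nat.Partrec.Code.eval d = Nat.Partrec.Code.eval c ∧
      ∀ n : ℕ, ∀ a ∈ Φ c n, ∀ b ∈ Φ d n, a < b)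
    (T : Set Nat.Partrec.Code) (hne : T ≠ ∅) (hnuniv : T ≠ Set.univ)
    (hbdd : ∃ ξ : ℕ → ℕ, Computable ξ ∧
      ∀ c ∈ T, ∀ n : ℕ, ∃ m ∈ Φ c n, m ≤ ξ n) :
    ∃ c ∈ T, ∃ d : Nat.Partrec.Code,
      Nat.Partrec.Code.eval d = Nat.Partrec.Code.eval c ∧ d ∉ T :=
  nontrivial_resource_bounded_is_syntactic_general Φ hdisc T hne hbdd
end
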